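/- arXiv:0809.3822 — 3 statements merged into one kernel-verified Lean document; each statement's English description precedes it below -/
import Mathlib

section
/- Let A be a join-semilattice, c ∈ A, and I₁, I₂ subsemilattices with A = I₁ ⊕_c I₂. Then the bijection φ: I₁ × I₂ → A determined by φ_c preserves joins: if φ_c(x₁, x₂, x) and φ_c(z₁, z₂, z), then φ_c(x₁∨z₁, x₂∨z₂, x∨z). -/
variable {α : Type*}

/-- `PMeet a b m`: the infimum of `{a, b}` exists and equals `m`. -/
def PMeet [SemilatticeSup α] (a b m : α) : Prop :=
  m ≤ a ∧ m ≤ b ∧ ∀ u, u ≤ a → u ≤ b → u ≤ m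

/-- Partial equation `a ∧ b = a' ∧ b'`: if either infimum exists, so does the
other and they are equal. -/
def MeetEq [SemilatticeSup α] (a b a' b' : α) : Prop :=
  (∀ m, PMeet a b m → PMeet a' b' m) ∧ (∀ m, PMeet a' b' m → PMeet a b m)

/-- Partial equation `(a ∧ b) ∨ y = a' ∧ b'`: if either side exists, so does
the other and they are equal. -/
def MeetJoinEq [SemilatticeSup α] (a b y a' b' : α) : Prop :=
  (∀ m, PMeet a b m → PMeet a' b' (m ⊔ y)) ∧
  (∀ m', PMeet a' b' m' → ∃ m, PMeet a b m ∧ m ⊔ y = m')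

/-- `φ_c(x₁, x₂, x)`: the conjunction of dist, p1, p2 and join. -/
def Phi [SemilatticeSup α] (c x₁ x₂ x : α) : Prop :=
  PMeet (x ⊔ x₁) (x ⊔ x₂) x ∧
  PMeet (x ⊔ x₁) (c ⊔ x₁) x₁ ∧
  PMeet (x ⊔ x₂) (c ⊔ x₂) x₂ ∧
  x₁ ⊔ x₂ = x ⊔ c

/-- A subsemilattice: a subset closed under join. -/
def SubSemilattice [SemilatticeSup α] (I : Set α) : Prop :=
  ∀ a ∈ I, ∀ b ∈ I, a ⊔ b ∈ I

/-- `A = I₁ ⊕_c I₂`: the generalized (c-)direct sum of two subsemilattices. -/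
structure CDirectSum [SemilatticeSup α] (c : α) (I₁ I₂ : Set α) : Prop where
  sub1 : SubSemilattice I₁
  sub2 : SubSemilattice I₂
  mod1 : ∀ x y : α, ∀ x₁ ∈ I₁, ∀ x₂ ∈ I₂, x₁ ⊔ x₂ ≤ x ⊔ c →
    MeetJoinEq (x ⊔ x₁) (x ⊔ x₂) y (x ⊔ y ⊔ x₁) (x ⊔ y ⊔ x₂)
  mod2 : ∀ x y : α, ∀ x₁ ∈ I₁, ∀ x₂ ∈ I₂, x ≤ x₁ ⊔ x₂ →
    MeetJoinEq (x ⊔ x₁) (c ⊔ x₁) y (x ⊔ y ⊔ x₁) (c ⊔ y ⊔ x₁) ∧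
    MeetJoinEq (x ⊔ x₂) (c ⊔ x₂) y (x ⊔ y ⊔ x₂) (c ⊔ y ⊔ x₂)
  abs1 : ∀ x₁ ∈ I₁, ∀ y₁ ∈ I₁, ∀ z₂ ∈ I₂, MeetEq x₁ (y₁ ⊔ z₂) x₁ (y₁ ⊔ c)
  abs2 : ∀ x₂ ∈ I₂, ∀ y₂ ∈ I₂, ∀ z₁ ∈ I₁, MeetEq x₂ (y₂ ⊔ z₁) x₂ (y₂ ⊔ c)
  exi : ∀ x₁ ∈ I₁, ∀ x₂ ∈ I₂, ∃ x : α, Phi c x₁ x₂ x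
  onto : ∀ x : α, ∃ x₁ ∈ I₁, ∃ x₂ ∈ I₂, Phi c x₁ x₂ x


/-!
The components of the decomposition `φ_c` are monotone: if `φ_c(x₁, x₂, x)`, `φ_c(t₁, t₂, t)`
and `x ≤ t`, then `x₁ ≤ t₁`, by Abs (which lets one trade `t₂` for `c` and then for `x₂` in
`x₁ ≤ t₁ ∨ t₂`) and Mod1 (which turns `x₁ ≤ t₁ ∨ x₂` into `x₁ ≤ x ∨ t₁`). Decomposing
`x ∨ z` as `φ_c(t₁, t₂, x ∨ z)` by onto, monotonicity gives `x₁ ∨ z₁ ≤ t₁` and `x₂ ∨ z₂ ≤ t₂`,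
from which the meet `(x ∨ z ∨ x₁ ∨ z₁) ∧ (x ∨ z ∨ x₂ ∨ z₂) = x ∨ z` follows. The two
projection equations come from Mod2, applied once to `x` and once to `z`.
-/

section PMeet

variable [SemilatticeSup α] {a b a' b' m : α}

lemma PMeet.comm (h : PMeet a b m) : PMeet b a m :=
  ⟨h.2.1, h.1, fun u hb ha => h.2.2 u ha hb⟩

lemma pMeet_self_iff : PMeet a b a ↔ a ≤ b :=
  ⟨fun h => h.2.1, fun hab => ⟨le_rfl, hab, fun _ hu _ => hu⟩⟩

lemma PMeet.of_le (h : PMeet a b m) (hma : m ≤ a') (ha : a' ≤ a) (hmb : m ≤ b')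
    (hb : b' ≤ b) : PMeet a' b' m :=
  ⟨hma, hmb, fun u hua hub => h.2.2 u (hua.trans ha) (hub.trans hb)⟩

end PMeet

lemma MeetJoinEq.comm [SemilatticeSup α] {a b y a' b' : α}
    (h : MeetJoinEq a b y a' b') : MeetJoinEq b a y b' a' :=
  ⟨fun m hm => (h.1 m hm.comm).comm,
   fun m' hm' => by obtain ⟨m, hm, he⟩ := h.2 m' hm'.comm; exact ⟨m, hm.comm, he⟩⟩

lemma Phi.swap [SemilatticeSup α] {c x₁ x₂ x : α} (h : Phi c x₁ x₂ x) :
    Phi c x₂ x₁ x :=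
  ⟨h.1.comm, h.2.2.1, h.2.1, sup_comm x₂ x₁ ▸ h.2.2.2⟩

namespace CDirectSum

variable [SemilatticeSup α] {c : α} {I₁ I₂ : Set α}

lemma swap (h : CDirectSum c I₁ I₂) : CDirectSum c I₂ I₁ where
  sub1 := h.sub2
  sub2 := h.sub1
  mod1 x y x₂ h2 x₁ h1 hle := (h.mod1 x y x₁ h1 x₂ h2 (sup_comm x₂ x₁ ▸ hle)).comm
  mod2 x y x₂ h2 x₁ h1 hle := (h.mod2 x y x₁ h1 x₂ h2 (sup_comm x₂ x₁ ▸ hle)).symm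
  abs1 := h.abs2
  abs2 := h.abs1
  exi x₂ h2 x₁ h1 := by
    obtain ⟨x, hx⟩ := h.exi x₁ h1 x₂ h2
    exact ⟨x, hx.swap⟩
  onto x := by
    obtain ⟨x₁, h1, x₂, h2, hx⟩ := h.onto x
    exact ⟨x₂, h2, x₁, h1, hx.swap⟩

lemma le_sup_iff_le_sup_center (h : CDirectSum c I₁ I₂) {x₁ y₁ z₂ : α} (hx₁ : x₁ ∈ I₁)
    (hy₁ : y₁ ∈ I₁) (hz₂ : z₂ ∈ I₂) : x₁ ≤ y₁ ⊔ z₂ ↔ x₁ ≤ y₁ ⊔ c := by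
  simp only [← pMeet_self_iff]
  exact ⟨(h.abs1 x₁ hx₁ y₁ hy₁ z₂ hz₂).1 x₁, (h.abs1 x₁ hx₁ y₁ hy₁ z₂ hz₂).2 x₁⟩

lemma le_sup_of_phi (h : CDirectSum c I₁ I₂) {x₁ x₂ x y : α} (hx₁ : x₁ ∈ I₁)
    (hx₂ : x₂ ∈ I₂) (hx : Phi c x₁ x₂ x) (hy : x₁ ≤ y ⊔ x₂) : x₁ ≤ x ⊔ y :=
  ((h.mod1 x y x₁ hx₁ x₂ hx₂ hx.2.2.2.le).1 x hx.1).2.2 x₁ le_sup_right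
    (hy.trans (sup_le_sup_right le_sup_right x₂))

theorem phi_fst_mono (h : CDirectSum c I₁ I₂) {x₁ x₂ t₁ t₂ x t : α} (hx₁ : x₁ ∈ I₁)
    (hx₂ : x₂ ∈ I₂) (ht₁ : t₁ ∈ I₁) (ht₂ : t₂ ∈ I₂) (hx : Phi c x₁ x₂ x)
    (ht : Phi c t₁ t₂ t) (hxt : x ≤ t) : x₁ ≤ t₁ := by
  have le_t : x₁ ≤ t₁ ⊔ t₂ :=
    calc x₁ ≤ x₁ ⊔ x₂ := le_sup_left
      _ = x ⊔ c := hx.2.2.2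
      _ ≤ t ⊔ c := sup_le_sup_right hxt c
      _ = t₁ ⊔ t₂ := ht.2.2.2.symm
  have le_c : x₁ ≤ t₁ ⊔ c := (h.le_sup_iff_le_sup_center hx₁ ht₁ ht₂).1 le_t
  have le_x₂ : x₁ ≤ t₁ ⊔ x₂ := (h.le_sup_iff_le_sup_center hx₁ ht₁ hx₂).2 le_c
  have le_x : x₁ ≤ x ⊔ t₁ := h.le_sup_of_phi hx₁ hx₂ hx le_x₂
  exact ht.2.1.2.2 x₁ (le_x.trans (sup_le_sup_right hxt t₁)) (le_c.trans_eq (sup_comm t₁ c))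

lemma pMeet_sup_fst (h : CDirectSum c I₁ I₂) {x₁ x₂ x : α} (hx₁ : x₁ ∈ I₁) (hx₂ : x₂ ∈ I₂)
    (hx : Phi c x₁ x₂ x) (y : α) : PMeet (x ⊔ y ⊔ x₁) (c ⊔ y ⊔ x₁) (x₁ ⊔ y) :=
  (h.mod2 x y x₁ hx₁ x₂ hx₂ (hx.2.2.2 ▸ le_sup_left)).1.1 x₁ hx.2.1

lemma pMeet_sup_sup_fst (h : CDirectSum c I₁ I₂) {x₁ x₂ z₁ z₂ x z : α} (hx₁ : x₁ ∈ I₁)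
    (hx₂ : x₂ ∈ I₂) (hz₁ : z₁ ∈ I₁) (hz₂ : z₂ ∈ I₂) (hx : Phi c x₁ x₂ x)
    (hz : Phi c z₁ z₂ z) : PMeet (x ⊔ z ⊔ (x₁ ⊔ z₁)) (c ⊔ (x₁ ⊔ z₁)) (x₁ ⊔ z₁) := by
  have meet_x := h.pMeet_sup_fst hx₁ hx₂ hx (z ⊔ z₁)
  have meet_z := h.pMeet_sup_fst hz₁ hz₂ hz x₁
  refine ⟨le_sup_right, le_sup_right, fun u hu hu' => ?_⟩
  have le_x : u ≤ x₁ ⊔ (z ⊔ z₁) :=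
    meet_x.2.2 u (hu.trans_eq (by ac_rfl))
      (hu'.trans (sup_le (le_sup_left.trans le_sup_left)
        (sup_le le_sup_right ((le_sup_right.trans le_sup_right).trans le_sup_left))))
  exact (meet_z.2.2 u (le_x.trans_eq (by ac_rfl)) (hu'.trans_eq (by ac_rfl))).trans_eq
    (sup_comm z₁ x₁)

end CDirectSum

/-- in a c-direct sum, the bijection determined by φ_c preserves
joins. -/
theorem phi_preserves_join [SemilatticeSup α] (c : α) (I₁ I₂ : Set α)
    (h : CDirectSum c I₁ I₂) :
    ∀ x₁ ∈ I₁, ∀ x₂ ∈ I₂, ∀ z₁ ∈ I₁, ∀ z₂ ∈ I₂, ∀ x z : α,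
      Phi c x₁ x₂ x → Phi c z₁ z₂ z →
      Phi c (x₁ ⊔ z₁) (x₂ ⊔ z₂) (x ⊔ z) := by
  intro x₁ hx₁ x₂ hx₂ z₁ hz₁ z₂ hz₂ x z hx hz
  obtain ⟨t₁, ht₁, t₂, ht₂, ht⟩ := h.onto (x ⊔ z)
  have le_t₁ : x₁ ⊔ z₁ ≤ t₁ :=
    sup_le (h.phi_fst_mono hx₁ hx₂ ht₁ ht₂ hx ht le_sup_left)
      (h.phi_fst_mono hz₁ hz₂ ht₁ ht₂ hz ht le_sup_right)
  have le_t₂ : x₂ ⊔ z₂ ≤ t₂ :=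
    sup_le (h.swap.phi_fst_mono hx₂ hx₁ ht₂ ht₁ hx.swap ht.swap le_sup_left)
      (h.swap.phi_fst_mono hz₂ hz₁ ht₂ ht₁ hz.swap ht.swap le_sup_right)
  refine ⟨ht.1.of_le le_sup_left (sup_le_sup_left le_t₁ _) le_sup_left
      (sup_le_sup_left le_t₂ _),
    h.pMeet_sup_sup_fst hx₁ hx₂ hz₁ hz₂ hx hz,
    h.swap.pMeet_sup_sup_fst hx₂ hx₁ hz₂ hz₁ hx.swap hz.swap, ?_⟩
  rw [sup_sup_sup_comm, hx.2.2.2, hz.2.2.2, sup_sup_sup_comm, sup_idem]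
end

section
/- Let A be a join-semilattice with greatest element 1 and suppose A = I₁ ⊕_1 I₂. Then I₁ and I₂ are dual ideals (upward closed, join-closed subsets) of A. -/
variable {α : Type*}

/-!
Write `b = b₁ ∧ b₂` with `bᵢ ∈ Iᵢ` as `onto` provides; the `p1`, `p2` parts of `φ_1(b₁, b₂, b)` force
`b ≤ b₁` and `b ≤ b₂`. If `a ∈ I₁` lies below `b`, then `a ≤ b₂`, while every join of an element
of `I₁` with one of `I₂` is `1`; hence `b₂ = 1` and `b = b₁ ∧ 1 = b₁ ∈ I₁`. The roles of the
summands are symmetric.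
-/

section

variable [SemilatticeSup α]

theorem PMeet.symm {a b m : α} (h : PMeet a b m) : PMeet b a m :=
  ⟨h.2.1, h.1, fun u hb ha => h.2.2 u ha hb⟩

theorem Phi.symm {c x₁ x₂ x : α} (h : Phi c x₁ x₂ x) : Phi c x₂ x₁ x :=
  ⟨h.1.symm, h.2.2.1, h.2.1, sup_comm x₂ x₁ ▸ h.2.2.2⟩

section OrderTop

variable [OrderTop α] {x₁ x₂ x : α}

theorem Phi.sup_eq_top (h : Phi ⊤ x₁ x₂ x) : x₁ ⊔ x₂ = ⊤ :=
  h.2.2.2.trans (sup_top_eq x)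

theorem Phi.le_left (h : Phi ⊤ x₁ x₂ x) : x ≤ x₁ :=
  le_sup_left.trans (h.2.1.2.2 _ le_rfl (by simp))

theorem Phi.eq_left_of_right_eq_top (h : Phi ⊤ x₁ ⊤ x) : x = x₁ :=
  le_antisymm h.le_left (le_sup_right.trans (h.1.2.2 _ le_rfl (by simp)))

theorem isUpperSet_of_phi_top {I₁ I₂ : Set α}
    (onto : ∀ x : α, ∃ x₁ ∈ I₁, ∃ x₂ ∈ I₂, Phi ⊤ x₁ x₂ x)
    (exi : ∀ x₁ ∈ I₁, ∀ x₂ ∈ I₂, ∃ x : α, Phi ⊤ x₁ x₂ x) : IsUpperSet I₁ := by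
  intro a b hab ha
  obtain ⟨b₁, hb₁, b₂, hb₂, hb⟩ := onto b
  obtain ⟨x, hx⟩ := exi a ha b₂ hb₂
  have hb₂_top : b₂ = ⊤ := by
    rw [← hx.sup_eq_top, sup_eq_right.mpr (hab.trans hb.symm.le_left)]
  subst hb₂_top
  rwa [hb.eq_left_of_right_eq_top]

end OrderTop

end

/-- in a 1-direct sum, the summands are dual ideals: nonempty,
upward closed (hence join-closed) subsets. -/
theorem summands_are_dual_ideals [SemilatticeSup α] [OrderTop α]
    (I₁ I₂ : Set α) (h : CDirectSum (⊤ : α) I₁ I₂) :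
    I₁.Nonempty ∧ (∀ a ∈ I₁, ∀ b : α, a ≤ b → b ∈ I₁) ∧
      (∀ a ∈ I₁, ∀ b ∈ I₁, a ⊔ b ∈ I₁) ∧
    I₂.Nonempty ∧ (∀ a ∈ I₂, ∀ b : α, a ≤ b → b ∈ I₂) ∧
      (∀ a ∈ I₂, ∀ b ∈ I₂, a ⊔ b ∈ I₂) := by
  obtain ⟨x₁, hx₁, x₂, hx₂, -⟩ := h.onto ⊤
  have hI₁ : IsUpperSet I₁ := isUpperSet_of_phi_top h.onto h.exi
  have hI₂ : IsUpperSet I₂ :=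
    isUpperSet_of_phi_top
      (fun x => let ⟨x₁, hx₁, x₂, hx₂, hx⟩ := h.onto x; ⟨x₂, hx₂, x₁, hx₁, hx.symm⟩)
      (fun x₂ hx₂ x₁ hx₁ => (h.exi x₁ hx₁ x₂ hx₂).imp fun _ hx => hx.symm)
  exact ⟨⟨x₁, hx₁⟩, fun a ha _ hab => hI₁ hab ha, h.sub1,
    ⟨x₂, hx₂⟩, fun a ha _ hab => hI₂ hab ha, h.sub2⟩
end

section
/- Let A be a join-semilattice, c ∈ A, and let ⟨θ,δ⟩ ↦ ⟨I_θ, I_δ⟩ (where I_θ = {a : a θ c}) and ⟨I₁,I₂⟩ ↦ ⟨ker π₂, ker π₁⟩ (where π₁, π₂ are the projections determined by φ_c) be the maps between pairs of complementary factor congruences of A and pairs of subsemilattices I₁, I₂ with A = I₁ ⊕_c I₂. These two maps are mutually inverse bijections. -/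
variable {α : Type*}

/-- A congruence of a join-semilattice: an equivalence compatible with ⊔. -/
def IsCongruence [SemilatticeSup α] (r : α → α → Prop) : Prop :=
  Equivalence r ∧ ∀ a b a' b' : α, r a b → r a' b' → r (a ⊔ a') (b ⊔ b')

/-- Complementary factor congruences: trivial intersection and full relational
composition (equivalently, a ↦ (a/δ, a/θ) is an isomorphism A ≅ A/δ × A/θ). -/
def Complementary [SemilatticeSup α] (r s : α → α → Prop) : Prop :=
  (∀ a b : α, r a b → s a b → a = b) ∧ (∀ a b : α, ∃ z : α, r a z ∧ s z b)

/-!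
A pair of complementary factor congruences identifies `A` with `A/θ × A/δ`, and `I_θ`, `I_δ`
are the elements whose `θ`-, resp. `δ`-coordinate is that of `c`. Every partial meet the
axioms of `I_θ ⊕_c I_δ` ask for is a meet of two elements that are comparable in each
coordinate, so it exists and is computed coordinatewise. Conversely, Abs and Mod1 (resp. Mod2)
make `x ↦ (π₁ x, π₂ x)` monotone (resp. order-reflecting), hence an order isomorphism
`A ≅ I₁ × I₂`; so the projections are join-homomorphisms with complementary kernels. Uniqueness
of the decomposition `φ_c` makes the two constructions mutually inverse.
-/

section PartialMeets
variable [SemilatticeSup α] {a b a' b' m y : α}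

theorem PMeet.unique {m' : α} (h : PMeet a b m) (h' : PMeet a b m') : m = m' :=
  le_antisymm (h'.2.2 m h.1 h.2.1) (h.2.2 m' h'.1 h'.2.1)

theorem pmeet_of_le (h : a ≤ b) : PMeet a b a :=
  ⟨le_rfl, h, fun _ hu _ => hu⟩

theorem pmeet_of_ge (h : b ≤ a) : PMeet a b b :=
  ⟨h, le_rfl, fun _ _ hu => hu⟩

theorem meetJoinEq_of_pmeet (h : PMeet a b m) (h' : PMeet a' b' (m ⊔ y)) :
    MeetJoinEq a b y a' b' :=
  ⟨fun _ hm => hm.unique h ▸ h', fun _ hm' => ⟨m, h, h'.unique hm'⟩⟩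

theorem meetEq_of_le_iff (h : ∀ u ≤ a, u ≤ b ↔ u ≤ b') : MeetEq a b a b' :=
  ⟨fun _ hm => ⟨hm.1, (h _ hm.1).1 hm.2.1, fun u hua hub => hm.2.2 u hua ((h u hua).2 hub)⟩,
   fun _ hm => ⟨hm.1, (h _ hm.1).2 hm.2.1, fun u hua hub => hm.2.2 u hua ((h u hua).1 hub)⟩⟩

theorem phi_self_left (c a : α) : Phi c a c a := by
  refine ⟨?_, ?_, ?_, rfl⟩ <;> rw [sup_idem]
  exacts [pmeet_of_le le_sup_left, pmeet_of_le le_sup_right, pmeet_of_ge le_sup_right]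

theorem phi_self_right (c a : α) : Phi c c a a := by
  refine ⟨?_, ?_, ?_, sup_comm c a⟩ <;> rw [sup_idem]
  exacts [pmeet_of_ge le_sup_left, pmeet_of_ge le_sup_right, pmeet_of_le le_sup_right]

end PartialMeets

def IsDecomposition [SemilatticeSup α] (c : α) (I₁ I₂ : Set α) (π₁ π₂ : α → α) : Prop :=
  ∀ x, π₁ x ∈ I₁ ∧ π₂ x ∈ I₂ ∧ Phi c (π₁ x) (π₂ x) x

namespace CDirectSum
variable [SemilatticeSup α] {c : α} {I₁ I₂ : Set α}

theorem le_sup_iff_le_sup_left (ds : CDirectSum c I₁ I₂) {a p q : α} (ha : a ∈ I₁)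
    (hp : p ∈ I₁) (hq : q ∈ I₂) : a ≤ p ⊔ q ↔ a ≤ p ⊔ c :=
  ⟨fun h => ((ds.abs1 a ha p hp q hq).1 a (pmeet_of_le h)).2.1,
   fun h => ((ds.abs1 a ha p hp q hq).2 a (pmeet_of_le h)).2.1⟩

theorem le_sup_iff_le_sup_right (ds : CDirectSum c I₁ I₂) {a p q : α} (ha : a ∈ I₂)
    (hp : p ∈ I₂) (hq : q ∈ I₁) : a ≤ p ⊔ q ↔ a ≤ p ⊔ c :=
  ⟨fun h => ((ds.abs2 a ha p hp q hq).1 a (pmeet_of_le h)).2.1,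
   fun h => ((ds.abs2 a ha p hp q hq).2 a (pmeet_of_le h)).2.1⟩

variable {x y x₁ x₂ y₁ y₂ : α}

theorem components_le_of_le (ds : CDirectSum c I₁ I₂) (h₁ : x₁ ∈ I₁) (h₂ : x₂ ∈ I₂)
    (k₁ : y₁ ∈ I₁) (k₂ : y₂ ∈ I₂) (hx : Phi c x₁ x₂ x) (hy : Phi c y₁ y₂ y) (hxy : x ≤ y) :
    x₁ ≤ y₁ ∧ x₂ ≤ y₂ := by
  have hx_le : x₁ ⊔ x₂ ≤ y ⊔ c := hx.2.2.2.le.trans (sup_le_sup_right hxy c)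
  have hx_le' : x₁ ⊔ x₂ ≤ y₁ ⊔ y₂ := hy.2.2.2 ▸ hx_le
  have hx₁ : x₁ ≤ y₁ ⊔ c := (ds.le_sup_iff_le_sup_left h₁ k₁ k₂).1 (by order)
  have hx₂ : x₂ ≤ y₂ ⊔ c := (ds.le_sup_iff_le_sup_right h₂ k₂ k₁).1 (by order)
  -- Mod1 carries the meet `x = (x ⊔ x₁) ∧ (x ⊔ x₂)` up to `y`, and then up to `y ⊔ yᵢ`.
  have hy_meet : PMeet (y ⊔ x₁) (y ⊔ x₂) y := by
    simpa only [sup_eq_right.2 hxy] using (ds.mod1 x y x₁ h₁ x₂ h₂ hx.2.2.2.le).1 x hx.1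
  have hmeet₁ := (ds.mod1 y y₁ x₁ h₁ x₂ h₂ hx_le).1 y hy_meet
  have hmeet₂ := (ds.mod1 y y₂ x₁ h₁ x₂ h₂ hx_le).1 y hy_meet
  have hx₁y : x₁ ≤ y ⊔ y₁ :=
    hmeet₁.2.2 x₁ le_sup_right (((ds.le_sup_iff_le_sup_left h₁ k₁ h₂).2 hx₁).trans (by order))
  have hx₂y : x₂ ≤ y ⊔ y₂ :=
    hmeet₂.2.2 x₂ (((ds.le_sup_iff_le_sup_right h₂ k₂ h₁).2 hx₂).trans (by order)) le_sup_right
  exact ⟨hy.2.1.2.2 x₁ hx₁y (hx₁.trans_eq (sup_comm _ _)),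
    hy.2.2.1.2.2 x₂ hx₂y (hx₂.trans_eq (sup_comm _ _))⟩

theorem le_of_components_le (ds : CDirectSum c I₁ I₂) (h₁ : x₁ ∈ I₁) (h₂ : x₂ ∈ I₂)
    (hx : Phi c x₁ x₂ x) (hy : Phi c y₁ y₂ y) (e₁ : x₁ ≤ y₁) (e₂ : x₂ ≤ y₂) : x ≤ y := by
  have hx_le : x ≤ x₁ ⊔ x₂ := le_sup_left.trans hx.2.2.2.ge
  have hy₁ : y₁ ≤ y ⊔ c := le_sup_left.trans hy.2.2.2.le
  have hy₂ : y₂ ≤ y ⊔ c := le_sup_right.trans hy.2.2.2.le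
  -- Mod2 carries `xᵢ = (x ⊔ xᵢ) ∧ (c ⊔ xᵢ)` up to `xᵢ ⊔ y = (x ⊔ y ⊔ xᵢ) ∧ (c ⊔ y ⊔ xᵢ)`.
  have hmeet₁ := (ds.mod2 x y x₁ h₁ x₂ h₂ hx_le).1.1 x₁ hx.2.1
  have hmeet₂ := (ds.mod2 x y x₁ h₁ x₂ h₂ hx_le).2.1 x₂ hx.2.2.1
  have hx₁y : x ≤ x₁ ⊔ y := hmeet₁.2.2 x (by order) (hx_le.trans (by order))
  have hx₂y : x ≤ x₂ ⊔ y := hmeet₂.2.2 x (by order) (hx_le.trans (by order))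
  exact hy.1.2.2 x (hx₁y.trans (by order)) (hx₂y.trans (by order))

theorem le_iff_components_le (ds : CDirectSum c I₁ I₂) (h₁ : x₁ ∈ I₁) (h₂ : x₂ ∈ I₂)
    (k₁ : y₁ ∈ I₁) (k₂ : y₂ ∈ I₂) (hx : Phi c x₁ x₂ x) (hy : Phi c y₁ y₂ y) :
    x ≤ y ↔ x₁ ≤ y₁ ∧ x₂ ≤ y₂ :=
  ⟨ds.components_le_of_le h₁ h₂ k₁ k₂ hx hy, fun h => ds.le_of_components_le h₁ h₂ hx hy h.1 h.2⟩

theorem components_unique (ds : CDirectSum c I₁ I₂) (h₁ : x₁ ∈ I₁) (h₂ : x₂ ∈ I₂)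
    (k₁ : y₁ ∈ I₁) (k₂ : y₂ ∈ I₂) (hx : Phi c x₁ x₂ x) (hy : Phi c y₁ y₂ x) :
    x₁ = y₁ ∧ x₂ = y₂ := by
  have hxy := (ds.le_iff_components_le h₁ h₂ k₁ k₂ hx hy).1 le_rfl
  have hyx := (ds.le_iff_components_le k₁ k₂ h₁ h₂ hy hx).1 le_rfl
  exact ⟨le_antisymm hxy.1 hyx.1, le_antisymm hxy.2 hyx.2⟩

theorem eq_of_phi (ds : CDirectSum c I₁ I₂) (h₁ : x₁ ∈ I₁) (h₂ : x₂ ∈ I₂)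
    (hx : Phi c x₁ x₂ x) (hy : Phi c x₁ x₂ y) : x = y :=
  le_antisymm (ds.le_of_components_le h₁ h₂ hx hy le_rfl le_rfl)
    (ds.le_of_components_le h₁ h₂ hy hx le_rfl le_rfl)

theorem phi_sup (ds : CDirectSum c I₁ I₂) (h₁ : x₁ ∈ I₁) (h₂ : x₂ ∈ I₂) (k₁ : y₁ ∈ I₁)
    (k₂ : y₂ ∈ I₂) (hx : Phi c x₁ x₂ x) (hy : Phi c y₁ y₂ y) :
    Phi c (x₁ ⊔ y₁) (x₂ ⊔ y₂) (x ⊔ y) := by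
  have l₁ : x₁ ⊔ y₁ ∈ I₁ := ds.sub1 _ h₁ _ k₁
  have l₂ : x₂ ⊔ y₂ ∈ I₂ := ds.sub2 _ h₂ _ k₂
  obtain ⟨z, hz⟩ := ds.exi _ l₁ _ l₂
  obtain ⟨w₁, m₁, w₂, m₂, hw⟩ := ds.onto (x ⊔ y)
  have hxw := ds.components_le_of_le h₁ h₂ m₁ m₂ hx hw le_sup_left
  have hyw := ds.components_le_of_le k₁ k₂ m₁ m₂ hy hw le_sup_right
  have hz_le : z ≤ x ⊔ y :=
    ds.le_of_components_le l₁ l₂ hz hw (sup_le hxw.1 hyw.1) (sup_le hxw.2 hyw.2)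
  have hx_le : x ≤ z := ds.le_of_components_le h₁ h₂ hx hz le_sup_left le_sup_left
  have hy_le : y ≤ z := ds.le_of_components_le k₁ k₂ hy hz le_sup_right le_sup_right
  rwa [← le_antisymm hz_le (sup_le hx_le hy_le)]

theorem c_mem_left (ds : CDirectSum c I₁ I₂) : c ∈ I₁ := by
  obtain ⟨c₁, h₁, c₂, -, hc⟩ := ds.onto c
  have hc₁ : c₁ = c :=
    le_antisymm (le_sup_left.trans (hc.2.2.2.trans (sup_idem c)).le)
      (le_sup_left.trans (hc.2.1.2.2 _ le_rfl le_rfl))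
  exact hc₁ ▸ h₁

theorem c_mem_right (ds : CDirectSum c I₁ I₂) : c ∈ I₂ := by
  obtain ⟨c₁, -, c₂, h₂, hc⟩ := ds.onto c
  have hc₂ : c₂ = c :=
    le_antisymm (le_sup_right.trans (hc.2.2.2.trans (sup_idem c)).le)
      (le_sup_left.trans (hc.2.2.1.2.2 _ le_rfl le_rfl))
  exact hc₂ ▸ h₂

variable {π₁ π₂ : α → α}

theorem proj_eq (ds : CDirectSum c I₁ I₂) (hπ : IsDecomposition c I₁ I₂ π₁ π₂) {x x₁ x₂ : α}
    (h₁ : x₁ ∈ I₁) (h₂ : x₂ ∈ I₂) (h : Phi c x₁ x₂ x) : π₁ x = x₁ ∧ π₂ x = x₂ :=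
  ds.components_unique (hπ x).1 (hπ x).2.1 h₁ h₂ (hπ x).2.2 h

theorem proj_sup (ds : CDirectSum c I₁ I₂) (hπ : IsDecomposition c I₁ I₂ π₁ π₂) (a b : α) :
    π₁ (a ⊔ b) = π₁ a ⊔ π₁ b ∧ π₂ (a ⊔ b) = π₂ a ⊔ π₂ b :=
  ds.proj_eq hπ (ds.sub1 _ (hπ a).1 _ (hπ b).1) (ds.sub2 _ (hπ a).2.1 _ (hπ b).2.1)
    (ds.phi_sup (hπ a).1 (hπ a).2.1 (hπ b).1 (hπ b).2.1 (hπ a).2.2 (hπ b).2.2)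

theorem proj_c (ds : CDirectSum c I₁ I₂) (hπ : IsDecomposition c I₁ I₂ π₁ π₂) :
    π₁ c = c ∧ π₂ c = c :=
  ds.proj_eq hπ ds.c_mem_left ds.c_mem_right (phi_self_left c c)

theorem complementary_ker (ds : CDirectSum c I₁ I₂) (hπ : IsDecomposition c I₁ I₂ π₁ π₂) :
    Complementary (fun a b => π₂ a = π₂ b) (fun a b => π₁ a = π₁ b) := by
  refine ⟨fun a b h₂ h₁ => ?_, fun a b => ?_⟩
  · have hb := (hπ b).2.2
    rw [← h₁, ← h₂] at hb
    exact ds.eq_of_phi (hπ a).1 (hπ a).2.1 (hπ a).2.2 hb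
  · obtain ⟨z, hz⟩ := ds.exi _ (hπ b).1 _ (hπ a).2.1
    obtain ⟨hz₁, hz₂⟩ := ds.proj_eq hπ (hπ b).1 (hπ a).2.1 hz
    exact ⟨z, hz₂.symm, hz₁⟩

theorem left_eq_setOf (ds : CDirectSum c I₁ I₂) (hπ : IsDecomposition c I₁ I₂ π₁ π₂) :
    I₁ = {a | π₂ a = π₂ c} := by
  ext a
  rw [Set.mem_ofPred_eq, (ds.proj_c hπ).2]
  refine ⟨fun ha => (ds.proj_eq hπ ha ds.c_mem_right (phi_self_left c a)).2, fun ha => ?_⟩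
  have hφ := (hπ a).2.2
  rw [ha] at hφ
  exact ds.eq_of_phi (hπ a).1 ds.c_mem_right hφ (phi_self_left c _) ▸ (hπ a).1

theorem right_eq_setOf (ds : CDirectSum c I₁ I₂) (hπ : IsDecomposition c I₁ I₂ π₁ π₂) :
    I₂ = {a | π₁ a = π₁ c} := by
  ext a
  rw [Set.mem_ofPred_eq, (ds.proj_c hπ).1]
  refine ⟨fun ha => (ds.proj_eq hπ ds.c_mem_left ha (phi_self_right c a)).1, fun ha => ?_⟩
  have hφ := (hπ a).2.2
  rw [ha] at hφ
  exact ds.eq_of_phi ds.c_mem_left (hπ a).2.1 hφ (phi_self_right c _) ▸ (hπ a).2.1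

end CDirectSum

theorem isCongruence_ker [SemilatticeSup α] {β : Type*} [Max β] {f : α → β}
    (hf : ∀ a b, f (a ⊔ b) = f a ⊔ f b) : IsCongruence fun a b => f a = f b :=
  ⟨⟨fun _ => rfl, Eq.symm, Eq.trans⟩, fun a b a' b' (h : f a = f b) (h' : f a' = f b') =>
    show f (a ⊔ a') = f (b ⊔ b') by rw [hf, hf, h, h']⟩

namespace IsCongruence
variable [SemilatticeSup α] {r : α → α → Prop}

theorem subSemilattice_setOf_rel (hr : IsCongruence r) (c : α) : SubSemilattice {a | r a c} :=
  fun a ha b hb => show r (a ⊔ b) c from sup_idem c ▸ hr.2 a c b c ha hb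

def setoid (hr : IsCongruence r) : Setoid α := ⟨r, hr.1⟩

def Quotient (hr : IsCongruence r) : Type _ := _root_.Quotient hr.setoid

instance (hr : IsCongruence r) : SemilatticeSup hr.Quotient :=
  letI : Max hr.Quotient := ⟨Quotient.map₂ (· ⊔ ·) fun _ _ h _ _ h' => hr.2 _ _ _ _ h h'⟩
  SemilatticeSup.mk'
    (by rintro ⟨a⟩ ⟨b⟩; exact congrArg (Quotient.mk _) (sup_comm a b))
    (by rintro ⟨a⟩ ⟨b⟩ ⟨d⟩; exact congrArg (Quotient.mk _) (sup_assoc a b d))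
    (by rintro ⟨a⟩; exact congrArg (Quotient.mk _) (sup_idem a))

variable (hr : IsCongruence r) {a b : α}

def mk (a : α) : hr.Quotient := Quotient.mk _ a

theorem mk_sup : hr.mk (a ⊔ b) = hr.mk a ⊔ hr.mk b := rfl

theorem mk_eq_mk : hr.mk a = hr.mk b ↔ r a b := Quotient.eq

theorem mk_monotone : Monotone hr.mk := fun a b h => by
  rw [← sup_eq_right.2 h, mk_sup]
  exact le_sup_left

end IsCongruence

namespace Complementary
open IsCongruence

variable [SemilatticeSup α] {θ δ : α → α → Prop} {a b m c x y x₁ x₂ : α}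

theorem symm (hθ : IsCongruence θ) (hδ : IsCongruence δ) (hco : Complementary θ δ) :
    Complementary δ θ :=
  ⟨fun a b h h' => hco.1 a b h' h, fun a b =>
    let ⟨z, h, h'⟩ := hco.2 b a
    ⟨z, hδ.1.symm h', hθ.1.symm h⟩⟩

theorem eq_of_mk_eq (hθ : IsCongruence θ) (hδ : IsCongruence δ) (hco : Complementary θ δ)
    (h₁ : hθ.mk a = hθ.mk b) (h₂ : hδ.mk a = hδ.mk b) : a = b :=
  hco.1 a b (hθ.mk_eq_mk.1 h₁) (hδ.mk_eq_mk.1 h₂)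

theorem le_of_mk_le (hθ : IsCongruence θ) (hδ : IsCongruence δ) (hco : Complementary θ δ)
    (h₁ : hθ.mk a ≤ hθ.mk b) (h₂ : hδ.mk a ≤ hδ.mk b) : a ≤ b :=
  sup_eq_right.1 <| hco.eq_of_mk_eq hθ hδ
    (by rw [mk_sup, sup_eq_right.2 h₁]) (by rw [mk_sup, sup_eq_right.2 h₂])

theorem exists_mk_eq_mk (hθ : IsCongruence θ) (hδ : IsCongruence δ) (hco : Complementary θ δ)
    (a b : α) : ∃ z, hθ.mk z = hθ.mk a ∧ hδ.mk z = hδ.mk b :=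
  let ⟨z, h, h'⟩ := hco.2 a b
  ⟨z, hθ.mk_eq_mk.2 (hθ.1.symm h), hδ.mk_eq_mk.2 h'⟩

theorem pmeet_of_mk (hθ : IsCongruence θ) (hδ : IsCongruence δ) (hco : Complementary θ δ)
    (hθm : hθ.mk m = hθ.mk b) (hθba : hθ.mk b ≤ hθ.mk a)
    (hδm : hδ.mk m = hδ.mk a) (hδab : hδ.mk a ≤ hδ.mk b) : PMeet a b m :=
  ⟨hco.le_of_mk_le hθ hδ (hθm ▸ hθba) hδm.le, hco.le_of_mk_le hθ hδ hθm.le (hδm ▸ hδab),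
    fun _ hua hub => hco.le_of_mk_le hθ hδ (hθm ▸ hθ.mk_monotone hub) (hδm ▸ hδ.mk_monotone hua)⟩

theorem meetJoinEq_of_mk_le (hθ : IsCongruence θ) (hδ : IsCongruence δ) (hco : Complementary θ δ)
    (hθba : hθ.mk b ≤ hθ.mk a) (hδab : hδ.mk a ≤ hδ.mk b) (y : α) :
    MeetJoinEq a b y (a ⊔ y) (b ⊔ y) := by
  obtain ⟨m, hθm, hδm⟩ := hco.exists_mk_eq_mk hθ hδ b a
  refine meetJoinEq_of_pmeet (hco.pmeet_of_mk hθ hδ hθm hθba hδm hδab)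
    (hco.pmeet_of_mk hθ hδ ?_ ?_ ?_ ?_) <;>
  simp only [mk_sup, hθm, hδm, sup_le_sup_right, hθba, hδab]

theorem mod1 (hθ : IsCongruence θ) (hδ : IsCongruence δ) (hco : Complementary θ δ)
    (hx₁ : θ x₁ c) (hx₂ : δ x₂ c) (hle : x₁ ⊔ x₂ ≤ x ⊔ c) (y : α) :
    MeetJoinEq (x ⊔ x₁) (x ⊔ x₂) y (x ⊔ y ⊔ x₁) (x ⊔ y ⊔ x₂) := by
  rw [sup_right_comm x y x₁, sup_right_comm x y x₂]
  have hθle := hθ.mk_monotone hle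
  have hδle := hδ.mk_monotone hle
  simp only [mk_sup, hθ.mk_eq_mk.2 hx₁, hδ.mk_eq_mk.2 hx₂] at hθle hδle
  refine hco.meetJoinEq_of_mk_le hθ hδ ?_ ?_ y <;>
  · simp only [mk_sup, hθ.mk_eq_mk.2 hx₁, hδ.mk_eq_mk.2 hx₂]
    order

theorem mod2_left (hθ : IsCongruence θ) (hδ : IsCongruence δ) (hco : Complementary θ δ)
    (hx₁ : θ x₁ c) (hx₂ : δ x₂ c) (hle : x ≤ x₁ ⊔ x₂) (y : α) :
    MeetJoinEq (x ⊔ x₁) (c ⊔ x₁) y (x ⊔ y ⊔ x₁) (c ⊔ y ⊔ x₁) := by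
  rw [sup_right_comm x y x₁, sup_right_comm c y x₁]
  have hδle := hδ.mk_monotone hle
  simp only [mk_sup, hδ.mk_eq_mk.2 hx₂] at hδle
  refine hco.meetJoinEq_of_mk_le hθ hδ ?_ ?_ y <;>
  · simp only [mk_sup, hθ.mk_eq_mk.2 hx₁]
    order

theorem abs1 (hθ : IsCongruence θ) (hδ : IsCongruence δ) (hco : Complementary θ δ)
    {y₁ z₂ : α} (hx₁ : θ x₁ c) (hy₁ : θ y₁ c) (hz₂ : δ z₂ c) :
    MeetEq x₁ (y₁ ⊔ z₂) x₁ (y₁ ⊔ c) := by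
  have hδ_eq : hδ.mk (y₁ ⊔ z₂) = hδ.mk (y₁ ⊔ c) := by
    simp only [mk_sup, hδ.mk_eq_mk.2 hz₂]
  refine meetEq_of_le_iff fun u hu => ?_
  have hθu := hθ.mk_monotone hu
  have hθ_le : hθ.mk u ≤ hθ.mk (y₁ ⊔ z₂) ∧ hθ.mk u ≤ hθ.mk (y₁ ⊔ c) := by
    simp only [mk_sup, hθ.mk_eq_mk.2 hx₁, hθ.mk_eq_mk.2 hy₁] at hθu ⊢
    exact ⟨hθu.trans le_sup_left, hθu.trans le_sup_right⟩
  exact ⟨fun h => hco.le_of_mk_le hθ hδ hθ_le.2 (hδ_eq ▸ hδ.mk_monotone h),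
    fun h => hco.le_of_mk_le hθ hδ hθ_le.1 (hδ_eq ▸ hδ.mk_monotone h)⟩

theorem phi_of_mk (hθ : IsCongruence θ) (hδ : IsCongruence δ) (hco : Complementary θ δ)
    (hx₁ : hθ.mk x₁ = hθ.mk c) (hx₂ : hδ.mk x₂ = hδ.mk c)
    (h₁ : hδ.mk x = hδ.mk x₁) (h₂ : hθ.mk x = hθ.mk x₂) : Phi c x₁ x₂ x := by
  refine ⟨hco.pmeet_of_mk hθ hδ ?_ ?_ ?_ ?_, hco.pmeet_of_mk hθ hδ ?_ ?_ ?_ ?_,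
    (hco.symm hθ hδ).pmeet_of_mk hδ hθ ?_ ?_ ?_ ?_, hco.eq_of_mk_eq hθ hδ ?_ ?_⟩ <;>
  simp only [mk_sup, hx₁, hx₂, h₁, h₂, sup_idem, le_sup_left, le_sup_right, sup_comm]

theorem exists_phi (hθ : IsCongruence θ) (hδ : IsCongruence δ) (hco : Complementary θ δ)
    (c x : α) : ∃ x₁ x₂, θ x₁ c ∧ δ x₂ c ∧ δ x x₁ ∧ θ x x₂ ∧ Phi c x₁ x₂ x := by
  obtain ⟨x₁, hθx₁, hδx₁⟩ := hco.exists_mk_eq_mk hθ hδ c x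
  obtain ⟨x₂, hθx₂, hδx₂⟩ := hco.exists_mk_eq_mk hθ hδ x c
  exact ⟨x₁, x₂, hθ.mk_eq_mk.1 hθx₁, hδ.mk_eq_mk.1 hδx₂, hδ.mk_eq_mk.1 hδx₁.symm,
    hθ.mk_eq_mk.1 hθx₂.symm, hco.phi_of_mk hθ hδ hθx₁ hδx₂ hδx₁.symm hθx₂.symm⟩

theorem cDirectSum (hθ : IsCongruence θ) (hδ : IsCongruence δ) (hco : Complementary θ δ)
    (c : α) : CDirectSum c {a | θ a c} {a | δ a c} where
  sub1 := hθ.subSemilattice_setOf_rel c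
  sub2 := hδ.subSemilattice_setOf_rel c
  mod1 _ y _ h₁ _ h₂ hle := hco.mod1 hθ hδ h₁ h₂ hle y
  mod2 _ y _ h₁ _ h₂ hle := ⟨hco.mod2_left hθ hδ h₁ h₂ hle y,
    (hco.symm hθ hδ).mod2_left hδ hθ h₂ h₁ (hle.trans_eq (sup_comm _ _)) y⟩
  abs1 _ h₁ _ k₁ _ h₂ := hco.abs1 hθ hδ h₁ k₁ h₂
  abs2 _ h₂ _ k₂ _ h₁ := (hco.symm hθ hδ).abs1 hδ hθ h₂ k₂ h₁
  exi x₁ h₁ x₂ h₂ :=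
    let ⟨x, hθx, hδx⟩ := hco.exists_mk_eq_mk hθ hδ x₂ x₁
    ⟨x, hco.phi_of_mk hθ hδ (hθ.mk_eq_mk.2 h₁) (hδ.mk_eq_mk.2 h₂) hδx hθx⟩
  onto x :=
    let ⟨x₁, x₂, h₁, h₂, _, _, hφ⟩ := hco.exists_phi hθ hδ c x
    ⟨x₁, h₁, x₂, h₂, hφ⟩

theorem rel_proj (hθ : IsCongruence θ) (hδ : IsCongruence δ) (hco : Complementary θ δ)
    {π₁ π₂ : α → α} (hπ : IsDecomposition c {a | θ a c} {a | δ a c} π₁ π₂) (x : α) :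
    δ x (π₁ x) ∧ θ x (π₂ x) := by
  obtain ⟨x₁, x₂, h₁, h₂, hδx, hθx, hφ⟩ := hco.exists_phi hθ hδ c x
  obtain ⟨hπ₁, hπ₂⟩ := (hco.cDirectSum hθ hδ c).proj_eq hπ h₁ h₂ hφ
  exact ⟨hπ₁ ▸ hδx, hπ₂ ▸ hθx⟩

theorem rel_iff_eq (hθ : IsCongruence θ) (hδ : IsCongruence δ) (hco : Complementary θ δ)
    {f : α → α} (hf : ∀ x, θ x (f x) ∧ δ (f x) c) (a b : α) : θ a b ↔ f a = f b := by
  refine ⟨fun h => hco.1 _ _ ?_ (hδ.1.trans (hf a).2 (hδ.1.symm (hf b).2)), fun h => ?_⟩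
  · exact hθ.1.trans (hθ.1.symm (hf a).1) (hθ.1.trans h (hf b).1)
  · exact hθ.1.trans (hf a).1 (h ▸ hθ.1.symm (hf b).1)

end Complementary

/-- the maps ⟨θ,δ⟩ ↦ ⟨I_θ, I_δ⟩ and ⟨I₁,I₂⟩ ↦ ⟨ker π₂, ker π₁⟩
are mutually inverse bijections between pairs of complementary factor
congruences and pairs of subsemilattices with A = I₁ ⊕_c I₂. -/
theorem bijection_congruences_direct_sums [SemilatticeSup α] (c : α) :
    (∀ θ δ : α → α → Prop, IsCongruence θ → IsCongruence δ →
      Complementary θ δ →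
      CDirectSum c {a : α | θ a c} {a : α | δ a c} ∧
      ∀ π₁ π₂ : α → α,
        (∀ x : α, π₁ x ∈ {a : α | θ a c} ∧ π₂ x ∈ {a : α | δ a c} ∧
          Phi c (π₁ x) (π₂ x) x) →
        (∀ a b : α, θ a b ↔ π₂ a = π₂ b) ∧
        (∀ a b : α, δ a b ↔ π₁ a = π₁ b)) ∧
    (∀ I₁ I₂ : Set α, CDirectSum c I₁ I₂ →
      ∀ π₁ π₂ : α → α,
        (∀ x : α, π₁ x ∈ I₁ ∧ π₂ x ∈ I₂ ∧ Phi c (π₁ x) (π₂ x) x) →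
        IsCongruence (fun a b : α => π₂ a = π₂ b) ∧
        IsCongruence (fun a b : α => π₁ a = π₁ b) ∧
        Complementary (fun a b : α => π₂ a = π₂ b)
          (fun a b : α => π₁ a = π₁ b) ∧
        I₁ = {a : α | π₂ a = π₂ c} ∧ I₂ = {a : α | π₁ a = π₁ c}) := by
  refine ⟨fun θ δ hθ hδ hco => ⟨hco.cDirectSum hθ hδ c, fun π₁ π₂ hπ => ⟨?_, ?_⟩⟩,
    fun I₁ I₂ ds π₁ π₂ hπ => ⟨?_, ?_, ds.complementary_ker hπ, ds.left_eq_setOf hπ,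
      ds.right_eq_setOf hπ⟩⟩
  · exact hco.rel_iff_eq hθ hδ fun x => ⟨(hco.rel_proj hθ hδ hπ x).2, (hπ x).2.1⟩
  · exact (hco.symm hθ hδ).rel_iff_eq hδ hθ fun x => ⟨(hco.rel_proj hθ hδ hπ x).1, (hπ x).1⟩
  · exact isCongruence_ker fun a b => (ds.proj_sup hπ a b).2
  · exact isCongruence_ker fun a b => (ds.proj_sup hπ a b).1
end
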